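/- Let M be a complete Riemannian manifold, η an L² q-form, β a (p−1)-form with ‖β(x)‖ ≤ c'·ρ(x₀,x) + c'', and χ_r cutoff functions with χ_r = 1 on B_r, χ_r = 0 outside B_{2r}, and ‖dχ_r(x)‖ ≤ K/ρ(x₀,x) on B_{2r} \ B_r. Then dχ_r ∧ β ∧ η → 0 in L² as r → ∞. -/

import Mathlib

open MeasureTheory Metric Filter
open scoped ENNReal Topology

/-!
For `r ≥ 1` the annulus `B_{2r} \ B_r` lies where `ρ(x₀, x) ≥ 1`, so there
`‖dχ_r‖ · ‖β‖ ≤ (K / ρ)(c' ρ + c'') ≤ |K| (|c'| + |c''|)`. Hence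
`‖dχ_r ∧ β ∧ η‖` is dominated by a fixed multiple of `‖η‖ ∈ L²` uniformly in
`r ≥ 1`, and it vanishes at each point once `r > ρ(x₀, x)`; dominated
convergence gives the claim.
-/

theorem tendsto_eLpNorm_zero_of_dominated {α E ι : Type*} [MeasurableSpace α] {μ : Measure α}
    [NormedAddCommGroup E] {p : ℝ≥0∞} (hp0 : p ≠ 0) (hp : p ≠ ∞)
    {l : Filter ι} [l.IsCountablyGenerated] {f : ι → α → E} {g : α → ℝ}
    (hf_meas : ∀ᶠ i in l, AEStronglyMeasurable (f i) μ) (hg : MemLp g p μ)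
    (h_bound : ∀ᶠ i in l, ∀ᵐ x ∂μ, ‖f i x‖ ≤ g x)
    (h_lim : ∀ᵐ x ∂μ, Tendsto (fun i => f i x) l (𝓝 0)) :
    Tendsto (fun i => eLpNorm (f i) p μ) l (𝓝 0) := by
  have hp_pos : 0 < p.toReal := ENNReal.toReal_pos hp0 hp
  have h_int : Tendsto (fun i => ∫⁻ x, ‖f i x‖ₑ ^ p.toReal ∂μ) l (𝓝 0) := by
    have := tendsto_lintegral_filter_of_dominated_convergence' (f := fun _ => 0)
      (fun x => ‖g x‖ₑ ^ p.toReal)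
      (hf_meas.mono fun i hi => hi.enorm.pow_const _)
      (h_bound.mono fun i hi => hi.mono fun x hx =>
        ENNReal.rpow_le_rpow (enorm_le_iff_norm_le.2 (hx.trans (Real.le_norm_self _))) hp_pos.le)
      (lintegral_rpow_enorm_lt_top_of_eLpNorm_lt_top hp0 hp hg.eLpNorm_lt_top).ne
      (h_lim.mono fun x hx => by simpa [hp_pos] using hx.enorm.ennrpow_const p.toReal)
    simpa using this
  simp_rw [eLpNorm_eq_lintegral_rpow_enorm_toReal hp0 hp]
  simpa [hp_pos] using h_int.ennrpow_const (1 / p.toReal)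

theorem div_mul_add_le_abs_mul {K a b ρ : ℝ} (hρ : 1 ≤ ρ) :
    K / ρ * (a * ρ + b) ≤ |K| * (|a| + |b|) := by
  have hρ0 : 0 < ρ := one_pos.trans_le hρ
  have hKa : K * a ≤ |K| * |a| := abs_mul K a ▸ le_abs_self _
  have hKb : K * b / ρ ≤ |K| * |b| :=
    calc K * b / ρ ≤ |K * b| / ρ := div_le_div_of_nonneg_right (le_abs_self _) hρ0.le
      _ ≤ |K * b| := div_le_self (abs_nonneg _) hρ
      _ = |K| * |b| := abs_mul K b
  calc K / ρ * (a * ρ + b) = K * a + K * b / ρ := by field_simp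
    _ ≤ |K| * (|a| + |b|) := by linarith

theorem norm_mul_norm_le_of_annulus {M L F : Type*} [PseudoMetricSpace M]
    [SeminormedAddGroup L] [SeminormedAddGroup F] {x₀ : M} {K c' c'' r : ℝ} {dχ : M → L} {β : M → F}
    (hβ : ∀ x, ‖β x‖ ≤ c' * dist x₀ x + c'')
    (hdχ0 : ∀ x ∈ ball x₀ r, dχ x = 0) (hdχ0' : ∀ x ∉ ball x₀ (2 * r), dχ x = 0)
    (hdχ : ∀ x ∈ ball x₀ (2 * r) \ ball x₀ r, ‖dχ x‖ ≤ K / dist x₀ x) (hr : 1 ≤ r) (x : M) :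
    ‖dχ x‖ * ‖β x‖ ≤ |K| * (|c'| + |c''|) := by
  by_cases hx : x ∈ ball x₀ (2 * r) \ ball x₀ r
  · have hρ : 1 ≤ dist x₀ x := hr.trans (not_lt.1 (mem_ball'.not.1 hx.2))
    calc ‖dχ x‖ * ‖β x‖ ≤ K / dist x₀ x * (c' * dist x₀ x + c'') :=
          mul_le_mul (hdχ x hx) (hβ x) (norm_nonneg _) ((norm_nonneg _).trans (hdχ x hx))
      _ ≤ |K| * (|c'| + |c''|) := div_mul_add_le_abs_mul hρ
  · have : dχ x = 0 := by
      by_cases h2r : x ∈ ball x₀ (2 * r)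
      · exact hdχ0 x (not_not.1 fun h => hx ⟨h2r, h⟩)
      · exact hdχ0' x h2r
    rw [this, norm_zero, zero_mul]
    positivity

theorem stmt3_general (M : Type*) [MetricSpace M] [MeasureSpace M]
    (x₀ : M)
    -- value spaces for 1-forms, (p-1)-forms, q-forms and (p+q)-forms
    (L F E G : Type*) [NormedAddCommGroup L] [NormedAddCommGroup F]
    [NormedAddCommGroup E] [NormedAddCommGroup G]
    -- the pointwise triple wedge product
    (wedge3 : L → F → E → G)
    (hwedge3 : ∀ l b e, ‖wedge3 l b e‖ ≤ ‖l‖ * ‖b‖ * ‖e‖)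
    -- a (p-1)-form β of linear growth
    (β : M → F) (c' c'' : ℝ) (hβ : ∀ x, ‖β x‖ ≤ c' * dist x₀ x + c'')
    -- an L² q-form η
    (η : M → E) (hη : MemLp η 2 volume)
    -- the differentials dχ_r of the cutoff functions
    (K : ℝ) (dχ : ℝ → M → L)
    (hdχ0 : ∀ r, ∀ x ∈ ball x₀ r, dχ r x = 0)
    (hdχ0' : ∀ r, ∀ x ∉ ball x₀ (2 * r), dχ r x = 0)
    (hdχ : ∀ r, ∀ x ∈ ball x₀ (2 * r) \ ball x₀ r,
      ‖dχ r x‖ ≤ K / dist x₀ x)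
    (hmeas : ∀ r, AEStronglyMeasurable
      (fun x => wedge3 (dχ r x) (β x) (η x)) volume) :
    Tendsto (fun r => eLpNorm (fun x => wedge3 (dχ r x) (β x) (η x)) 2 volume)
      atTop (nhds 0) := by
  set C := |K| * (|c'| + |c''|)
  have h_bound : ∀ r, 1 ≤ r → ∀ x, ‖wedge3 (dχ r x) (β x) (η x)‖ ≤ C * ‖η x‖ := fun r hr x =>
    (hwedge3 _ _ _).trans <| mul_le_mul_of_nonneg_right
      (norm_mul_norm_le_of_annulus hβ (hdχ0 r) (hdχ0' r) (hdχ r) hr x) (norm_nonneg _)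
  have h_lim : ∀ x, Tendsto (fun r => wedge3 (dχ r x) (β x) (η x)) atTop (𝓝 0) := fun x =>
    tendsto_const_nhds.congr' <| (eventually_gt_atTop (dist x₀ x)).mono fun r hr => by
      dsimp only
      rw [hdχ0 r x (mem_ball'.2 hr)]
      exact (norm_le_zero_iff.1 (by simpa using hwedge3 0 (β x) (η x))).symm
  exact tendsto_eLpNorm_zero_of_dominated two_ne_zero ENNReal.ofNat_ne_top
    (Eventually.of_forall hmeas) (hη.norm.const_mul C)
    ((eventually_ge_atTop 1).mono fun r hr => ae_of_all _ (h_bound r hr)) (ae_of_all _ h_lim)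

theorem stmt3 (M : Type*) [MetricSpace M] [MeasureSpace M] [CompleteSpace M]
    (x₀ : M)
    -- value spaces for 1-forms, (p-1)-forms, q-forms and (p+q)-forms
    (L F E G : Type*) [NormedAddCommGroup L] [NormedSpace ℝ L]
    [NormedAddCommGroup F] [NormedSpace ℝ F]
    [NormedAddCommGroup E] [NormedSpace ℝ E]
    [NormedAddCommGroup G] [NormedSpace ℝ G]
    -- the pointwise triple wedge product
    (wedge3 : L → F → E → G)
    (hwedge3 : ∀ l b e, ‖wedge3 l b e‖ ≤ ‖l‖ * ‖b‖ * ‖e‖)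
    -- a (p-1)-form β of linear growth
    (β : M → F) (c' c'' : ℝ) (hβ : ∀ x, ‖β x‖ ≤ c' * dist x₀ x + c'')
    -- an L² q-form η
    (η : M → E) (hη : MemLp η 2 volume)
    -- the differentials dχ_r of the cutoff functions
    (K : ℝ) (dχ : ℝ → M → L)
    (hdχ0 : ∀ r, ∀ x ∈ ball x₀ r, dχ r x = 0)
    (hdχ0' : ∀ r, ∀ x ∉ ball x₀ (2 * r), dχ r x = 0)
    (hdχ : ∀ r, ∀ x ∈ ball x₀ (2 * r) \ ball x₀ r,
      ‖dχ r x‖ ≤ K / dist x₀ x)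
    (hmeas : ∀ r, AEStronglyMeasurable
      (fun x => wedge3 (dχ r x) (β x) (η x)) volume) :
    Tendsto (fun r => eLpNorm (fun x => wedge3 (dχ r x) (β x) (η x)) 2 volume)
      atTop (nhds 0) :=
  stmt3_general M x₀ L F E G wedge3 hwedge3 β c' c'' hβ η hη K dχ hdχ0 hdχ0' hdχ hmeas
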